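/- arXiv:2503.20239 — 3 statements merged into one kernel-verified Lean document; each statement's English description precedes it below -/
import Mathlib

section
/- Let G be a graph with minimum degree δ(G) ≥ 1 that has a vertex of degree 1, and suppose G - u is (1,1,2,2)-packing colorable for the vertex u of degree 1. Then G is (1,1,2,2)-packing colorable. -/
open SimpleGraph

variable {V : Type*}

def square (G : SimpleGraph V) : SimpleGraph V where
  Adj x y := x ≠ y ∧ (G.Adj x y ∨ ∃ z, G.Adj x z ∧ G.Adj z y)
  symm := by
    constructor
    rintro x y ⟨hxy, h | ⟨z, h1, h2⟩⟩
    · exact ⟨hxy.symm, Or.inl h.symm⟩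
    · exact ⟨hxy.symm, Or.inr ⟨z, h2.symm, h1.symm⟩⟩
  loopless := ⟨fun x h => h.1 rfl⟩

/-- Any two distinct vertices of `A` are at distance at least 3 in `G`. -/
def PairwiseDist3 (G : SimpleGraph V) (A : Set V) : Prop :=
  ∀ x ∈ A, ∀ y ∈ A, x ≠ y → ¬ (square G).Adj x y

/-- `A` is an independent set of `G`. -/
def IndepSet (G : SimpleGraph V) (A : Set V) : Prop :=
  ∀ x ∈ A, ∀ y ∈ A, ¬ G.Adj x y

/-- A `(1,1,2,2)`-packing coloring of `G`: a partition of the vertex set into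
`V1, V2, V3, V4` where `V1, V2` are independent and any two distinct vertices
of `V3` (resp. `V4`) are at distance at least 3. -/
def Packing1122 (G : SimpleGraph V) : Prop :=
  ∃ V1 V2 V3 V4 : Set V,
    (∀ v, v ∈ V1 ∨ v ∈ V2 ∨ v ∈ V3 ∨ v ∈ V4) ∧
    Disjoint V1 V2 ∧ Disjoint V1 V3 ∧ Disjoint V1 V4 ∧
    Disjoint V2 V3 ∧ Disjoint V2 V4 ∧ Disjoint V3 V4 ∧
    IndepSet G V1 ∧ IndepSet G V2 ∧ PairwiseDist3 G V3 ∧ PairwiseDist3 G V4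

/-!
Colour the pendant vertex `u` with colour 1 on top of a colouring of `G - u`. Its only neighbour `w`
may itself have colour 1; since colours 1 and 2 play symmetric roles, swap them in that case. The
distance-3 classes are unaffected by adding `u` back: a path `a - u - b` forces `a = b = w`.
-/

variable {G : SimpleGraph V}

def IsPacking1122 (G : SimpleGraph V) (V1 V2 V3 V4 : Set V) : Prop :=
  (∀ v, v ∈ V1 ∨ v ∈ V2 ∨ v ∈ V3 ∨ v ∈ V4) ∧
    Disjoint V1 V2 ∧ Disjoint V1 V3 ∧ Disjoint V1 V4 ∧
    Disjoint V2 V3 ∧ Disjoint V2 V4 ∧ Disjoint V3 V4 ∧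
    IndepSet G V1 ∧ IndepSet G V2 ∧ PairwiseDist3 G V3 ∧ PairwiseDist3 G V4

theorem packing1122_iff :
    Packing1122 G ↔ ∃ V1 V2 V3 V4, IsPacking1122 G V1 V2 V3 V4 :=
  Iff.rfl

theorem IsPacking1122.swap {V1 V2 V3 V4 : Set V} (h : IsPacking1122 G V1 V2 V3 V4) :
    IsPacking1122 G V2 V1 V3 V4 := by
  obtain ⟨hcov, h12, h13, h14, h23, h24, h34, hI1, hI2, hP3, hP4⟩ := h
  exact ⟨fun v => by rcases hcov v with h | h | h | h <;> tauto,
    h12.symm, h23, h24, h13, h14, h34, hI2, hI1, hP3, hP4⟩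

theorem IndepSet.image_val {s : Set V} {A : Set s} (hA : IndepSet (G.induce s) A) :
    IndepSet G (Subtype.val '' A) := by
  rintro _ ⟨a, ha, rfl⟩ _ ⟨b, hb, rfl⟩
  exact hA a ha b hb

theorem IndepSet.insert {A : Set V} {u : V} (hA : IndepSet G A) (hu : ∀ x ∈ A, ¬G.Adj u x) :
    IndepSet G (insert u A) := by
  rintro x (rfl | hx) y (rfl | hy) hxy
  · exact G.loopless.irrefl _ hxy
  · exact hu y hy hxy
  · exact hu x hx hxy.symm
  · exact hA x hx y hy hxy

theorem PairwiseDist3.image_val_of_adj_imp_eq {u w : V} (hu : ∀ x, G.Adj u x → x = w)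
    {A : Set ({u}ᶜ : Set V)} (hA : PairwiseDist3 (G.induce {u}ᶜ) A) :
    PairwiseDist3 G (Subtype.val '' A) := by
  rintro _ ⟨a, ha, rfl⟩ _ ⟨b, hb, rfl⟩ hne ⟨-, hsq⟩
  have hab : a ≠ b := fun e => hne (congrArg Subtype.val e)
  refine hA a ha b hb hab ⟨hab, ?_⟩
  rcases hsq with hadj | ⟨z, haz, hzb⟩
  · exact Or.inl hadj
  · by_cases hz : z = u
    · subst hz
      exact absurd (Subtype.ext ((hu a haz.symm).trans (hu b hzb).symm)) hab
    · exact Or.inr ⟨⟨z, hz⟩, haz, hzb⟩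

theorem IsPacking1122.lift_of_adj_imp_eq {u w : V} (hu : ∀ x, G.Adj u x → x = w)
    {V1 V2 V3 V4 : Set ({u}ᶜ : Set V)} (h : IsPacking1122 (G.induce {u}ᶜ) V1 V2 V3 V4)
    (hw : ∀ a ∈ V1, (a : V) ≠ w) :
    IsPacking1122 G (insert u (Subtype.val '' V1)) (Subtype.val '' V2) (Subtype.val '' V3)
      (Subtype.val '' V4) := by
  obtain ⟨hcov, h12, h13, h14, h23, h24, h34, hI1, hI2, hP3, hP4⟩ := h
  have hu_notMem (A : Set ({u}ᶜ : Set V)) : u ∉ Subtype.val '' A := by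
    rintro ⟨a, -, hau⟩
    exact a.2 hau
  have hdisj {A B : Set ({u}ᶜ : Set V)} (hAB : Disjoint A B) :
      Disjoint (Subtype.val '' A) (Subtype.val '' B) :=
    (Set.disjoint_image_iff Subtype.val_injective).mpr hAB
  refine ⟨fun v => ?_, Set.disjoint_insert_left.mpr ⟨hu_notMem _, hdisj h12⟩,
    Set.disjoint_insert_left.mpr ⟨hu_notMem _, hdisj h13⟩,
    Set.disjoint_insert_left.mpr ⟨hu_notMem _, hdisj h14⟩, hdisj h23, hdisj h24, hdisj h34,
    hI1.image_val.insert ?_, hI2.image_val, hP3.image_val_of_adj_imp_eq hu,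
    hP4.image_val_of_adj_imp_eq hu⟩
  · by_cases hv : v = u
    · exact Or.inl (Or.inl hv)
    · rcases hcov ⟨v, hv⟩ with h | h | h | h
      · exact Or.inl (Or.inr ⟨_, h, rfl⟩)
      · exact Or.inr (Or.inl ⟨_, h, rfl⟩)
      · exact Or.inr (Or.inr (Or.inl ⟨_, h, rfl⟩))
      · exact Or.inr (Or.inr (Or.inr ⟨_, h, rfl⟩))
  · rintro _ ⟨a, ha, rfl⟩ hua
    exact hw a ha (hu a hua)

theorem packing1122_of_induce_compl_singleton {u w : V} (hu : ∀ x, G.Adj u x → x = w)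
    (h : Packing1122 (G.induce {u}ᶜ)) : Packing1122 G := by
  obtain ⟨V1, V2, V3, V4, hc⟩ := packing1122_iff.mp h
  by_cases hw : ∃ a ∈ V1, (a : V) = w
  · obtain ⟨a, ha, rfl⟩ := hw
    refine ⟨_, _, _, _, hc.swap.lift_of_adj_imp_eq hu ?_⟩
    rintro b hb hba
    exact Set.disjoint_left.mp hc.2.1 ha (Subtype.ext hba ▸ hb)
  · push Not at hw
    exact ⟨_, _, _, _, hc.lift_of_adj_imp_eq hu hw⟩

theorem stmt1_general [Fintype V] (G : SimpleGraph V) [DecidableRel G.Adj]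
    (u : V) (hu : G.degree u = 1)
    (h : Packing1122 (G.induce ({u}ᶜ : Set V))) :
    Packing1122 G := by
  obtain ⟨w, -, hw⟩ := degree_eq_one_iff_existsUnique_adj.mp hu
  exact packing1122_of_induce_compl_singleton hw h

theorem stmt1 [Fintype V] (G : SimpleGraph V) [DecidableRel G.Adj]
    (hmin : ∀ v, 1 ≤ G.degree v) (u : V) (hu : G.degree u = 1)
    (h : Packing1122 (G.induce ({u}ᶜ : Set V))) :
    Packing1122 G :=
  stmt1_general G u hu h
end

section
/- Let G be a non-regular subcubic graph with δ(G) = 2 and weight w(x) = 1 + min{dist(x,u) : d_G(u) = 2}. Let S be an induced bipartite subgraph with bipartition {S₁, S₂} maximizing (|E(S)|, Σ_{x∈S} w(x)) lexicographically. If x ∉ V(S) has all three of its neighbors x₁, x₂, x₃ in S with x₁, x₂ in the same part, then x₃ has degree 2 in S and w(x₃) ≥ w(x). -/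
open SimpleGraph Finset

variable {V : Type*}

/-- `A` is an independent set of `G`. -/
def IndepF [Fintype V] [DecidableEq V] (G : SimpleGraph V) (A : Finset V) : Prop :=
  ∀ x ∈ A, ∀ y ∈ A, ¬ G.Adj x y

/-- Number of edges of `G` between the disjoint independent sets `A` and `B`;
for an induced bipartite subgraph with parts `A`, `B` this is its number of edges. -/
def eb [Fintype V] [DecidableEq V] (G : SimpleGraph V) [DecidableRel G.Adj]
    (A B : Finset V) : ℕ :=
  ∑ x ∈ A, (G.neighborFinset x ∩ B).card

/-- The weight `w(x) = 1 + min { dist(x,u) : d_G(u) = 2 }`. -/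
noncomputable def weight [Fintype V] (G : SimpleGraph V) [DecidableRel G.Adj] (x : V) : ℕ :=
  1 + sInf {d : ℕ | ∃ u, G.degree u = 2 ∧ G.dist x u = d}

/-- Total weight of a set of vertices. -/
noncomputable def weightSum [Fintype V] (G : SimpleGraph V) [DecidableRel G.Adj]
    (A : Finset V) : ℕ :=
  ∑ x ∈ A, weight G x

/-- `S1, S2` are the parts of an induced bipartite subgraph of `G` maximizing
`(|E(S)|, w(S))` lexicographically among all induced bipartite subgraphs of `G`. -/
noncomputable def MaxLexBip [Fintype V] [DecidableEq V] (G : SimpleGraph V)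
    [DecidableRel G.Adj] (S1 S2 : Finset V) : Prop :=
  Disjoint S1 S2 ∧ IndepF G S1 ∧ IndepF G S2 ∧
    ∀ T1 T2 : Finset V, Disjoint T1 T2 → IndepF G T1 → IndepF G T2 →
      eb G T1 T2 < eb G S1 S2 ∨
        (eb G T1 T2 = eb G S1 S2 ∧ weightSum G (T1 ∪ T2) ≤ weightSum G (S1 ∪ S2))

lemma eb_comm [Fintype V] [DecidableEq V] (G : SimpleGraph V) [DecidableRel G.Adj]
    (A B : Finset V) : eb G A B = eb G B A := by
  unfold eb
  have h : ∀ (a : V) (C : Finset V),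
      G.neighborFinset a ∩ C = C.filter (fun b => G.Adj a b) := by
    intro a C; ext b
    simp [SimpleGraph.mem_neighborFinset, and_comm]
  simp_rw [h, Finset.card_filter]
  rw [Finset.sum_comm]
  refine Finset.sum_congr rfl fun b _ => Finset.sum_congr rfl fun a _ => ?_
  by_cases hab : G.Adj a b
  · rw [if_pos hab, if_pos hab.symm]
  · rw [if_neg hab, if_neg (fun h' => hab h'.symm)]

lemma maxLexBip_symm [Fintype V] [DecidableEq V] (G : SimpleGraph V) [DecidableRel G.Adj]
    {S1 S2 : Finset V} (h : MaxLexBip G S1 S2) : MaxLexBip G S2 S1 := by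
  obtain ⟨hd, h1, h2, hm⟩ := h
  refine ⟨hd.symm, h2, h1, fun T1 T2 hdT hT1 hT2 => ?_⟩
  rw [eb_comm G S2 S1, Finset.union_comm S2 S1]
  exact hm T1 T2 hdT hT1 hT2

lemma key [Fintype V] [DecidableEq V] (G : SimpleGraph V) [DecidableRel G.Adj]
    (hsub : ∀ v, G.degree v ≤ 3)
    (S1 S2 : Finset V) (hmax : MaxLexBip G S1 S2)
    (x x1 x2 x3 : V) (hx : x ∉ S1 ∪ S2)
    (hN : G.neighborFinset x = {x1, x2, x3})
    (h1 : x1 ∈ S1) (h2 : x2 ∈ S1) (hne : x1 ≠ x2)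
    (h3 : x3 ∈ S1 ∪ S2) :
    (G.neighborFinset x3 ∩ (S1 ∪ S2)).card = 2 ∧ weight G x ≤ weight G x3 := by
  obtain ⟨hd, hI1, hI2, hm⟩ := hmax
  have hxS1 : x ∉ S1 := fun h => hx (Finset.mem_union_left _ h)
  have hxS2 : x ∉ S2 := fun h => hx (Finset.mem_union_right _ h)
  have hadj1 : G.Adj x x1 := by
    rw [← SimpleGraph.mem_neighborFinset, hN]; simp
  have hadj2 : G.Adj x x2 := by
    rw [← SimpleGraph.mem_neighborFinset, hN]; simp
  have hadj3 : G.Adj x x3 := by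
    rw [← SimpleGraph.mem_neighborFinset, hN]; simp
  have hNmem : ∀ b, G.Adj x b → b = x1 ∨ b = x2 ∨ b = x3 := by
    intro b hb
    have : b ∈ G.neighborFinset x := (SimpleGraph.mem_neighborFinset _ _ _).mpr hb
    rw [hN] at this
    simpa using this
  -- Step A : x3 ∉ S1
  have hx3S1 : x3 ∉ S1 := by
    intro h31
    have hT2 : IndepF G (insert x S2) := by
      intro a ha b hb hab
      have hall : ∀ c, G.Adj x c → c ∈ S1 := by
        intro c hc
        rcases hNmem c hc with rfl | rfl | rfl <;> assumption
      rcases Finset.mem_insert.mp ha with hax | haS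
      · rcases Finset.mem_insert.mp hb with hbx | hbS
        · rw [hax, hbx] at hab; exact G.irrefl hab
        · rw [hax] at hab
          exact Finset.disjoint_left.mp hd (hall b hab) hbS
      · rcases Finset.mem_insert.mp hb with hbx | hbS
        · rw [hbx] at hab
          exact Finset.disjoint_left.mp hd (hall a hab.symm) haS
        · exact hI2 a haS b hbS hab
    have hdT : Disjoint S1 (insert x S2) := by
      rw [Finset.disjoint_insert_right]
      exact ⟨hxS1, hd⟩
    have hcomp : eb G S1 (insert x S2) =
        (G.neighborFinset x ∩ S1).card + eb G S1 S2 := by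
      rw [eb_comm, eb_comm G S1 S2]
      unfold eb
      rw [Finset.sum_insert hxS2]
    have hpos : 1 ≤ (G.neighborFinset x ∩ S1).card := by
      have : x1 ∈ G.neighborFinset x ∩ S1 := by
        rw [Finset.mem_inter, SimpleGraph.mem_neighborFinset]
        exact ⟨hadj1, h1⟩
      exact Finset.card_pos.mpr ⟨x1, this⟩
    rcases hm S1 (insert x S2) hdT hI1 hT2 with hlt | ⟨heq, _⟩
    · omega
    · omega
  have hB : x3 ∈ S2 := by
    rcases Finset.mem_union.mp h3 with h | h
    · exact absurd h hx3S1
    · exact h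
  -- Step C : swap x3 for x
  have hxE : x ∉ S2.erase x3 := fun h => hxS2 (Finset.mem_of_mem_erase h)
  have hT2 : IndepF G (insert x (S2.erase x3)) := by
    intro a ha b hb hab
    have hkey : ∀ c, c ∈ S2.erase x3 → ¬ G.Adj x c := by
      intro c hc hadj
      obtain ⟨hcne, hcS2⟩ := Finset.mem_erase.mp hc
      rcases hNmem c hadj with rfl | rfl | rfl
      · exact Finset.disjoint_left.mp hd h1 hcS2
      · exact Finset.disjoint_left.mp hd h2 hcS2
      · exact hcne rfl
    rcases Finset.mem_insert.mp ha with hax | haS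
    · rcases Finset.mem_insert.mp hb with hbx | hbS
      · rw [hax, hbx] at hab; exact G.irrefl hab
      · rw [hax] at hab; exact hkey b hbS hab
    · rcases Finset.mem_insert.mp hb with hbx | hbS
      · rw [hbx] at hab; exact hkey a haS hab.symm
      · exact hI2 a (Finset.mem_of_mem_erase haS) b (Finset.mem_of_mem_erase hbS) hab
  have hdT : Disjoint S1 (insert x (S2.erase x3)) := by
    rw [Finset.disjoint_insert_right]
    exact ⟨hxS1, hd.mono_right (Finset.erase_subset _ _)⟩
  have hNx : G.neighborFinset x ∩ S1 = {x1, x2} := by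
    rw [hN]
    ext b
    simp only [Finset.mem_inter, Finset.mem_insert, Finset.mem_singleton]
    constructor
    · rintro ⟨(rfl | rfl | rfl), hbS⟩
      · exact Or.inl rfl
      · exact Or.inr rfl
      · exact absurd hbS hx3S1
    · rintro (rfl | rfl)
      · exact ⟨Or.inl rfl, h1⟩
      · exact ⟨Or.inr (Or.inl rfl), h2⟩
  have hNxcard : (G.neighborFinset x ∩ S1).card = 2 := by
    rw [hNx]
    rw [Finset.card_insert_of_notMem (by simpa using hne), Finset.card_singleton]
  have hsplit : eb G S2 S1 =
      (G.neighborFinset x3 ∩ S1).card + eb G (S2.erase x3) S1 := by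
    unfold eb
    exact (Finset.add_sum_erase _ _ hB).symm
  have hcomp : eb G S1 (insert x (S2.erase x3)) =
      2 + eb G (S2.erase x3) S1 := by
    rw [eb_comm]
    unfold eb
    rw [Finset.sum_insert hxE]
    show (G.neighborFinset x ∩ S1).card + _ = _
    rw [hNxcard]
  have he3le : (G.neighborFinset x3 ∩ S1).card ≤ 2 := by
    have hsubs : G.neighborFinset x3 ∩ S1 ⊆ (G.neighborFinset x3).erase x := by
      intro b hb
      obtain ⟨hb1, hb2⟩ := Finset.mem_inter.mp hb
      exact Finset.mem_erase.mpr ⟨fun h => hxS1 (h ▸ hb2), hb1⟩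
    have hxmem : x ∈ G.neighborFinset x3 :=
      (SimpleGraph.mem_neighborFinset _ _ _).mpr hadj3.symm
    calc (G.neighborFinset x3 ∩ S1).card
        ≤ ((G.neighborFinset x3).erase x).card := Finset.card_le_card hsubs
      _ = (G.neighborFinset x3).card - 1 := Finset.card_erase_of_mem hxmem
      _ = G.degree x3 - 1 := by rw [SimpleGraph.card_neighborFinset_eq_degree]
      _ ≤ 2 := by have := hsub x3; omega
  have hebS : eb G S1 S2 = eb G S2 S1 := eb_comm G S1 S2
  rcases hm S1 (insert x (S2.erase x3)) hdT hI1 hT2 with hlt | ⟨heq, hw⟩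
  · omega
  · have he3 : (G.neighborFinset x3 ∩ S1).card = 2 := by omega
    constructor
    · have hcap : G.neighborFinset x3 ∩ (S1 ∪ S2) = G.neighborFinset x3 ∩ S1 := by
        ext b
        simp only [Finset.mem_inter, Finset.mem_union, SimpleGraph.mem_neighborFinset]
        constructor
        · rintro ⟨hadj, hb1 | hb2⟩
          · exact ⟨hadj, hb1⟩
          · exact absurd hadj (hI2 x3 hB b hb2)
        · rintro ⟨hadj, hb⟩
          exact ⟨hadj, Or.inl hb⟩
      rw [hcap, he3]
    · have hU : S1 ∪ insert x (S2.erase x3) = insert x ((S1 ∪ S2).erase x3) := by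
        ext b
        simp only [Finset.mem_union, Finset.mem_insert, Finset.mem_erase]
        constructor
        · rintro (hb | rfl | ⟨hbne, hb⟩)
          · exact Or.inr ⟨fun h => hx3S1 (h ▸ hb), Or.inl hb⟩
          · exact Or.inl rfl
          · exact Or.inr ⟨hbne, Or.inr hb⟩
        · rintro (rfl | ⟨hbne, hb | hb⟩)
          · exact Or.inr (Or.inl rfl)
          · exact Or.inl hb
          · exact Or.inr (Or.inr ⟨hbne, hb⟩)
      have hxE2 : x ∉ (S1 ∪ S2).erase x3 := fun h => hx (Finset.mem_of_mem_erase h)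
      rw [hU] at hw
      unfold weightSum at hw
      rw [Finset.sum_insert hxE2] at hw
      have hS : ∑ y ∈ S1 ∪ S2, weight G y =
          weight G x3 + ∑ y ∈ (S1 ∪ S2).erase x3, weight G y :=
        (Finset.add_sum_erase _ _ h3).symm
      omega

theorem stmt8 [Fintype V] [DecidableEq V] (G : SimpleGraph V) [DecidableRel G.Adj]
    (hsub : ∀ v, G.degree v ≤ 3) (hδ : ∀ v, 2 ≤ G.degree v) (hex : ∃ u, G.degree u = 2)
    (S1 S2 : Finset V) (hmax : MaxLexBip G S1 S2)
    (x x1 x2 x3 : V) (hx : x ∉ S1 ∪ S2)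
    (hN : G.neighborFinset x = {x1, x2, x3}) (hdeg : G.degree x = 3)
    (h12 : (x1 ∈ S1 ∧ x2 ∈ S1) ∨ (x1 ∈ S2 ∧ x2 ∈ S2)) (hne : x1 ≠ x2)
    (h3 : x3 ∈ S1 ∪ S2) :
    (G.neighborFinset x3 ∩ (S1 ∪ S2)).card = 2 ∧ weight G x ≤ weight G x3 := by
  rcases h12 with ⟨h1, h2⟩ | ⟨h1, h2⟩
  · exact key G hsub S1 S2 hmax x x1 x2 x3 hx hN h1 h2 hne h3
  · have := key G hsub S2 S1 (maxLexBip_symm G hmax) x x1 x2 x3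
      (by rwa [Finset.union_comm S2 S1]) hN h1 h2 hne
      (by rwa [Finset.union_comm S2 S1])
    rwa [Finset.union_comm S2 S1] at this
end

section
/- Let G be a subcubic graph, S an induced bipartite subgraph of G maximizing |E(S)| with bipartition {S₁, S₂}, and x ∉ V(S) a vertex with all three neighbors x₁, x₂, x₃ in S, where x₁, x₂ ∈ S₁ and x₃ ∈ S₂. Then x₃ has exactly two neighbors in S₁ (i.e., d_S(x₃) = 2). -/
open SimpleGraph Finset

variable {V : Type*}

/-- `S1, S2` are the parts of an induced bipartite subgraph of `G` whose number of
edges is maximum among all induced bipartite subgraphs of `G`. -/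
def MaxEdgesBip [Fintype V] [DecidableEq V] (G : SimpleGraph V) [DecidableRel G.Adj]
    (S1 S2 : Finset V) : Prop :=
  Disjoint S1 S2 ∧ IndepF G S1 ∧ IndepF G S2 ∧
    ∀ T1 T2 : Finset V, Disjoint T1 T2 → IndepF G T1 → IndepF G T2 →
      eb G T1 T2 ≤ eb G S1 S2

theorem stmt15 [Fintype V] [DecidableEq V] (G : SimpleGraph V) [DecidableRel G.Adj]
    (hsub : ∀ v, G.degree v ≤ 3) (S1 S2 : Finset V) (hmax : MaxEdgesBip G S1 S2)
    (x x1 x2 x3 : V) (hx : x ∉ S1 ∪ S2)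
    (hN : G.neighborFinset x = {x1, x2, x3}) (hcard : G.degree x = 3)
    (h1 : x1 ∈ S1) (h2 : x2 ∈ S1) (h12 : x1 ≠ x2) (h3 : x3 ∈ S2) :
    (G.neighborFinset x3 ∩ S1).card = 2 := by
  obtain ⟨hdisj, hI1, hI2, hmaxx⟩ := hmax
  simp only [Finset.mem_union, not_or] at hx
  obtain ⟨hxS1, hxS2⟩ := hx
  have hxx3 : G.Adj x x3 := by
    rw [← SimpleGraph.mem_neighborFinset, hN]; simp
  have hNx3 : x ∈ G.neighborFinset x3 := by
    rw [SimpleGraph.mem_neighborFinset]; exact hxx3.symm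
  -- upper bound
  have hub : (G.neighborFinset x3 ∩ S1).card ≤ 2 := by
    have hsubset : G.neighborFinset x3 ∩ S1 ⊆ (G.neighborFinset x3).erase x := by
      intro v hv
      simp only [Finset.mem_inter] at hv
      refine Finset.mem_erase.2 ⟨?_, hv.1⟩
      rintro rfl; exact hxS1 hv.2
    have hdeg : (G.neighborFinset x3).card ≤ 3 := hsub x3
    calc (G.neighborFinset x3 ∩ S1).card
        ≤ ((G.neighborFinset x3).erase x).card := Finset.card_le_card hsubset
      _ = (G.neighborFinset x3).card - 1 := Finset.card_erase_of_mem hNx3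
      _ ≤ 2 := by omega
  -- lower bound via exchange
  have hxnot : x ∉ S2.erase x3 := fun h => hxS2 (Finset.mem_of_mem_erase h)
  have key : ∀ w ∈ S2.erase x3, ¬ G.Adj x w := by
    intro w hw hadj
    have hwN : w ∈ G.neighborFinset x := (SimpleGraph.mem_neighborFinset G x w).2 hadj
    rw [hN] at hwN
    simp only [Finset.mem_insert, Finset.mem_singleton] at hwN
    obtain ⟨hwne, hwS2⟩ := Finset.mem_erase.1 hw
    rcases hwN with rfl | rfl | rfl
    · exact (Finset.disjoint_left.1 hdisj h1) hwS2
    · exact (Finset.disjoint_left.1 hdisj h2) hwS2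
    · exact hwne rfl
  have hTindep : IndepF G (insert x (S2.erase x3)) := by
    intro u hu v hv
    rw [Finset.mem_insert] at hu hv
    rcases hu with rfl | hu
    · rcases hv with rfl | hv
      · exact G.irrefl
      · exact key v hv
    · rcases hv with rfl | hv
      · intro hadj; exact key u hu hadj.symm
      · exact hI2 u (Finset.mem_of_mem_erase hu) v (Finset.mem_of_mem_erase hv)
  have hTdisj : Disjoint (insert x (S2.erase x3)) S1 := by
    rw [Finset.disjoint_left]
    intro a ha haS1
    rcases Finset.mem_insert.1 ha with rfl | ha
    · exact hxS1 haS1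
    · exact Finset.disjoint_left.1 hdisj haS1 (Finset.mem_of_mem_erase ha)
  have hmax' := hmaxx (insert x (S2.erase x3)) S1 hTdisj hTindep hI1
  have hebT : eb G (insert x (S2.erase x3)) S1
      = (G.neighborFinset x ∩ S1).card + eb G (S2.erase x3) S1 := by
    unfold eb; rw [Finset.sum_insert hxnot]
  have hebS : eb G S2 S1
      = (G.neighborFinset x3 ∩ S1).card + eb G (S2.erase x3) S1 := by
    unfold eb
    rw [← Finset.add_sum_erase S2 _ h3]
  have hxn : (G.neighborFinset x ∩ S1).card = 2 := by
    have heq : G.neighborFinset x ∩ S1 = {x1, x2} := by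
      rw [hN]
      ext v
      simp only [Finset.mem_inter, Finset.mem_insert, Finset.mem_singleton]
      constructor
      · rintro ⟨(rfl | rfl | rfl), hv⟩
        · exact Or.inl rfl
        · exact Or.inr rfl
        · exact absurd hv (Finset.disjoint_right.1 hdisj h3)
      · rintro (rfl | rfl)
        · exact ⟨Or.inl rfl, h1⟩
        · exact ⟨Or.inr (Or.inl rfl), h2⟩
    rw [heq, Finset.card_pair h12]
  have hsymm : eb G S1 S2 = eb G S2 S1 := eb_comm G S1 S2
  omega
end
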